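/- Let G be a directed graph with nonnegative vertex weights, D its distance matrix (D[v,u] = minimum total vertex weight of a path from v to u, ∞ if none), and B ⊆ V a set that intersects, for every pair (v,u) whose every shortest path has at least t edges, the vertex set of some shortest v–u path. Then for every pair (v,u): D[v,u] = min( δ_{t-1}(v,u), min over b ∈ B of D[v,b] + D[b,u] − w(b) ). -/

import Mathlib

open scoped ENNReal NNReal

/-- `l` is a directed path (walk) from `v` to `u` in the graph with edge relation `E`:
consecutive elements are joined by edges, the first element is `v` and the last is `u`. -/
def IsWalk {V : Type*} (E : V → V → Prop) (l : List V) (v u : V) : Prop :=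
  l.Chain' E ∧ l.head? = some v ∧ l.getLast? = some u

/-- The total weight of the vertices on a path, with vertex weights `w`. -/
noncomputable def pathWeight {V : Type*} (w : V → ℝ≥0) (l : List V) : ℝ≥0∞ :=
  (l.map fun x => (w x : ℝ≥0∞)).sum

/-- `deltaN E w i v u` is the minimum total vertex weight of a directed path from `v` to `u`
using at most `i` edges (i.e. at most `i + 1` vertices); it is `∞` if no such path exists. -/
noncomputable def deltaN {V : Type*} (E : V → V → Prop) (w : V → ℝ≥0) (i : ℕ) (v u : V) :
    ℝ≥0∞ :=
  sInf {c | ∃ l : List V, IsWalk E l v u ∧ l.length ≤ i + 1 ∧ c = pathWeight w l}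

/-- `deltaInf E w v u` is the distance from `v` to `u`: the minimum total vertex weight
over all directed paths from `v` to `u` (`∞` if none exists). -/
noncomputable def deltaInf {V : Type*} (E : V → V → Prop) (w : V → ℝ≥0) (v u : V) : ℝ≥0∞ :=
  sInf {c | ∃ l : List V, IsWalk E l v u ∧ c = pathWeight w l}

/-- `l` is a minimum-weight path from `v` to `u`. -/
def IsMinPath {V : Type*} (E : V → V → Prop) (w : V → ℝ≥0) (l : List V) (v u : V) : Prop :=
  IsWalk E l v u ∧ pathWeight w l = deltaInf E w v u

/-!
The inequality `D[v,u] ≤ D[v,b] + D[b,u] - w(b)` comes from concatenating a `v`–`b` path with a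
`b`–`u` path, which visits `b` twice. Conversely, if some shortest `v`–`u` path has fewer than `t`
edges it is counted by `δ_{t-1}`; otherwise `B` meets some shortest path at a vertex
`b`, and cutting it at `b` gives a `v`–`b` and a `b`–`u` path of total weight `D[v,u] + w(b)`.
-/

lemma pathWeight_append_singleton_add_cons {V : Type*} (w : V → ℝ≥0) (s l : List V) (b : V) :
    pathWeight w (s ++ [b]) + pathWeight w (b :: l) = pathWeight w (s ++ b :: l) + w b := by
  simp only [pathWeight, List.map_append, List.map_cons, List.map_nil, List.sum_append,
    List.sum_cons, List.sum_nil]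
  ring

namespace IsWalk

variable {V : Type*} {E : V → V → Prop} {l : List V} {v u : V}

lemma exists_eq_cons (h : IsWalk E l v u) : ∃ l', l = v :: l' := by
  obtain ⟨_, hhead, _⟩ := h
  exact List.head?_eq_some_iff.mp hhead

lemma exists_eq_append_singleton (h : IsWalk E l v u) : ∃ l', l = l' ++ [u] :=
  List.getLast?_eq_some_iff.mp h.2.2

lemma length_pos (h : IsWalk E l v u) : 0 < l.length := by
  obtain ⟨l', rfl⟩ := h.exists_eq_cons
  simp

end IsWalk

lemma isWalk_append_cons_iff {V : Type*} {E : V → V → Prop} {s l : List V} {v b u : V} :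
    IsWalk E (s ++ b :: l) v u ↔ IsWalk E (s ++ [b]) v b ∧ IsWalk E (b :: l) b u := by
  have hhead : (s ++ b :: l).head? = (s ++ [b]).head? := by cases s <;> simp
  have hlast : (s ++ b :: l).getLast? = (b :: l).getLast? :=
    List.getLast?_append_of_ne_nil _ (List.cons_ne_nil b l)
  constructor
  · rintro ⟨hchain, hv, hu⟩
    obtain ⟨hchain₁, hchain₂⟩ := List.isChain_split.mp hchain
    exact ⟨⟨hchain₁, hhead ▸ hv, List.getLast?_concat⟩, hchain₂, rfl, hlast ▸ hu⟩
  · rintro ⟨⟨hchain₁, hv, -⟩, hchain₂, -, hu⟩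
    exact ⟨List.isChain_split.mpr ⟨hchain₁, hchain₂⟩, hhead ▸ hv, hlast ▸ hu⟩

section Distances

variable {V : Type*} (E : V → V → Prop) (w : V → ℝ≥0)

lemma deltaInf_le_pathWeight {l : List V} {v u : V} (h : IsWalk E l v u) :
    deltaInf E w v u ≤ pathWeight w l :=
  sInf_le ⟨l, h, rfl⟩

lemma deltaN_le_pathWeight {i : ℕ} {l : List V} {v u : V} (h : IsWalk E l v u)
    (hl : l.length ≤ i + 1) : deltaN E w i v u ≤ pathWeight w l :=
  sInf_le ⟨l, h, hl, rfl⟩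

lemma deltaInf_le_deltaN (i : ℕ) (v u : V) : deltaInf E w v u ≤ deltaN E w i v u :=
  sInf_le_sInf fun _ ⟨l, hl, _, hc⟩ => ⟨l, hl, hc⟩

lemma deltaInf_add_weight_le (v b u : V) :
    deltaInf E w v u + w b ≤ deltaInf E w v b + deltaInf E w b u := by
  conv_rhs => rw [deltaInf, ENNReal.sInf_add]
  refine le_iInf₂ fun _ ⟨s, hs, hcs⟩ => ?_
  conv_rhs => rw [deltaInf, ENNReal.add_sInf]
  refine le_iInf₂ fun _ ⟨l, hl, hcl⟩ => ?_
  obtain ⟨s', rfl⟩ := hs.exists_eq_append_singleton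
  obtain ⟨l', rfl⟩ := hl.exists_eq_cons
  subst hcs hcl
  calc deltaInf E w v u + w b ≤ pathWeight w (s' ++ b :: l') + w b := by
        gcongr
        exact deltaInf_le_pathWeight E w (isWalk_append_cons_iff.mpr ⟨hs, hl⟩)
    _ = pathWeight w (s' ++ [b]) + pathWeight w (b :: l') :=
        (pathWeight_append_singleton_add_cons w s' l' b).symm

lemma deltaInf_le_sub (v b u : V) :
    deltaInf E w v u ≤ deltaInf E w v b + deltaInf E w b u - w b :=
  ENNReal.le_sub_of_add_le_right ENNReal.coe_ne_top (deltaInf_add_weight_le E w v b u)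

lemma IsMinPath.sub_le_deltaInf {l : List V} {v b u : V} (hl : IsMinPath E w l v u)
    (hb : b ∈ l) : deltaInf E w v b + deltaInf E w b u - w b ≤ deltaInf E w v u := by
  obtain ⟨s, l', rfl⟩ := List.append_of_mem hb
  obtain ⟨hvb, hbu⟩ := isWalk_append_cons_iff.mp hl.1
  calc deltaInf E w v b + deltaInf E w b u - w b
      ≤ pathWeight w (s ++ [b]) + pathWeight w (b :: l') - w b := by
        gcongr
        · exact deltaInf_le_pathWeight E w hvb
        · exact deltaInf_le_pathWeight E w hbu
    _ = pathWeight w (s ++ b :: l') := by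
        rw [pathWeight_append_singleton_add_cons, ENNReal.add_sub_cancel_right ENNReal.coe_ne_top]
    _ = deltaInf E w v u := hl.2

end Distances

theorem bridging_set_combination {V : Type*} (E : V → V → Prop) (w : V → ℝ≥0)
    (t : ℕ) (B : Set V)
    (hB : ∀ v u : V, deltaInf E w v u ≠ ⊤ →
      (∀ l : List V, IsMinPath E w l v u → t + 1 ≤ l.length) →
      ∃ l : List V, IsMinPath E w l v u ∧ ∃ b ∈ B, b ∈ l) :
    ∀ v u : V, deltaInf E w v u =
      min (deltaN E w (t - 1) v u)
        (⨅ b : B, deltaInf E w v (b : V) + deltaInf E w (b : V) u - (w (b : V) : ℝ≥0∞)) := by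
  intro v u
  refine le_antisymm (le_min (deltaInf_le_deltaN E w _ v u)
    (le_iInf fun b => deltaInf_le_sub E w v b u)) ?_
  by_cases hfin : deltaInf E w v u = ⊤
  · exact hfin ▸ le_top
  by_cases hlong : ∀ l : List V, IsMinPath E w l v u → t + 1 ≤ l.length
  · obtain ⟨l, hl, b, hbB, hbl⟩ := hB v u hfin hlong
    exact (min_le_right _ _).trans ((iInf_le _ ⟨b, hbB⟩).trans (hl.sub_le_deltaInf E w hbl))
  · push Not at hlong
    obtain ⟨l, hl, hlen⟩ := hlong
    -- `t - 1` truncates at `t = 0`, where a walk's positive length makes `hlen` absurd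
    have := hl.1.length_pos
    exact (min_le_left _ _).trans (hl.2 ▸ deltaN_le_pathWeight E w hl.1 (by omega))
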